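/- Eager-scope λ-ho-term-graphs over the same underlying term graph are unique: if P₁ and P₂ are correct abstraction-prefix functions for the same underlying term graph such that both resulting λ-ho-term-graphs are eager-scope, then P₁ = P₂. -/

import Mathlib

/-- A (root-connected) term graph over signature `Sig` with arity function `ar`,
    with vertex type `V`. -/
structure TermGraph (Sig : Type) (ar : Sig → ℕ) (V : Type) where
  lab : V → Sig
  args : V → List V
  root : V
  arity_ok : ∀ v, (args v).length = ar (lab v)
  rooted : ∀ v, Relation.ReflTransGen (fun a b => b ∈ args a) root v

/-- `R` is a bisimulation between term graphs `G₁` and `G₂`. -/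
def IsBisim {Sig : Type} {ar : Sig → ℕ} {V₁ V₂ : Type}
    (G₁ : TermGraph Sig ar V₁) (G₂ : TermGraph Sig ar V₂)
    (R : V₁ → V₂ → Prop) : Prop :=
  R G₁.root G₂.root ∧
  (∀ v w, R v w → G₁.lab v = G₂.lab w) ∧
  (∀ v w, R v w → List.Forall₂ R (G₁.args v) (G₂.args w))

/-- `G₁` and `G₂` are bisimilar. -/
def Bisim {Sig : Type} {ar : Sig → ℕ} {V₁ V₂ : Type}
    (G₁ : TermGraph Sig ar V₁) (G₂ : TermGraph Sig ar V₂) : Prop :=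
  ∃ R, IsBisim G₁ G₂ R

/-- `h` is a homomorphism of term graphs: it maps root to root, preserves labels,
    and commutes with the argument function. -/
def IsHom {Sig : Type} {ar : Sig → ℕ} {V₁ V₂ : Type}
    (G₁ : TermGraph Sig ar V₁) (G₂ : TermGraph Sig ar V₂) (h : V₁ → V₂) : Prop :=
  h G₁.root = G₂.root ∧
  (∀ v, G₂.lab (h v) = G₁.lab v) ∧
  (∀ v, G₂.args (h v) = (G₁.args v).map h)

/-- There exists a functional bisimulation (homomorphism) from `G₁` to `G₂`. -/
def FunBisim {Sig : Type} {ar : Sig → ℕ} {V₁ V₂ : Type}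
    (G₁ : TermGraph Sig ar V₁) (G₂ : TermGraph Sig ar V₂) : Prop :=
  ∃ h, IsHom G₁ G₂ h

/-- The signature for lambda higher-order term graphs:
    application, abstraction, variable occurrence, black hole. -/
inductive HoSig : Type
  | app | lam | var | bh
deriving DecidableEq

/-- Arities for the higher-order lambda signature. -/
def arH : HoSig → ℕ
  | .app => 2
  | .lam => 1
  | .var => 1
  | .bh  => 0

/-- A correct abstraction-prefix function for a term graph over the higher-order
    lambda signature (the data of a lambda higher-order term graph). -/
structure CorrectPrefixHo {V : Type} (G : TermGraph HoSig arH V)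
    (P : V → List V) : Prop where
  root : P G.root = []
  blackhole : ∀ v, G.lab v = HoSig.bh → P v = []
  lamCond : ∀ w v, G.lab w = HoSig.lam → (G.args w)[0]? = some v →
    P v <+: P w ++ [w]
  appCond : ∀ w v (k : ℕ), G.lab w = HoSig.app → (G.args w)[k]? = some v →
    P v <+: P w
  varCond : ∀ w v, G.lab w = HoSig.var → (G.args w)[0]? = some v →
    G.lab v = HoSig.lam ∧ P v ++ [v] = P w

/-- Eager scope: for every vertex whose abstraction prefix ends in an abstraction
    vertex, there is a path to that abstraction vertex passing only through vertices
    whose prefixes extend the prefix of the starting vertex, whose last step goes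
    from a variable vertex to the abstraction vertex. -/
def EagerScope {V : Type} (G : TermGraph HoSig arH V) (P : V → List V) : Prop :=
  ∀ w p v, P w = p ++ [v] →
    ∃ ws : List V, ws.head? = some w ∧
      List.Chain' (fun a b => b ∈ G.args a) ws ∧
      (∀ u ∈ ws.tail, P w <+: P u) ∧
      ∃ wm, ws.getLast? = some wm ∧ G.lab wm = HoSig.var ∧
        (G.args wm)[0]? = some v

/-! An abstraction-prefix function `P` is determined along the edges from the root, and
`P b` is always a prefix of `P a ++ [a]` for an edge `a → b`; consequently every entry `x` of
`P w` is preceded in `P w` by exactly `P x`. If `Q w` ends in `v` and `Q` has eager scope, the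
path from `w` to a variable bound by `v` never visits `v` (all its vertices have `Q`-prefixes
longer than `Q v`), so walking it backwards shows `v ∈ P w` for any other correct `P`. Thus the
last entries of `P₁ w` and `P₂ w` occur in each other's prefixes; if they differed, each would
sit strictly before the other, which is impossible once `P₁` and `P₂` agree on them. Induction
on `|P₁ w| + |P₂ w|` closes the argument. -/

variable {V : Type}

def PrefixCoherent (P : V → List V) (l : List V) : Prop :=
  ∀ l₁ x l₂, l = l₁ ++ x :: l₂ → P x = l₁

variable {G : TermGraph HoSig arH V} {P : V → List V}

theorem PrefixCoherent.of_prefix {l l' : List V} (hl : PrefixCoherent P l) (h : l' <+: l) :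
    PrefixCoherent P l' := by
  obtain ⟨t, rfl⟩ := h
  intro l₁ x l₂ e
  exact hl l₁ x (l₂ ++ t) (by simp [e])

theorem PrefixCoherent.append_singleton {l : List V} {b : V} (hl : PrefixCoherent P l)
    (hb : P b = l) : PrefixCoherent P (l ++ [b]) := by
  intro l₁ x l₂ e
  rcases List.eq_nil_or_concat' l₂ with rfl | ⟨l₂, c, rfl⟩
  · obtain ⟨rfl, rfl⟩ : l = l₁ ∧ b = x := by simpa using e
    exact hb
  · rw [← List.cons_append, ← List.append_assoc] at e
    exact hl l₁ x l₂ (List.append_inj' e rfl).1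

namespace CorrectPrefixHo

theorem prefix_of_mem_args (h : CorrectPrefixHo G P) {a b : V} (hb : b ∈ G.args a) :
    P b <+: P a ++ [a] := by
  obtain ⟨k, hk⟩ := List.mem_iff_getElem?.mp hb
  have hk_lt : k < arH (G.lab a) := G.arity_ok a ▸ (List.getElem?_eq_some_iff.mp hk).1
  cases hl : G.lab a <;> simp only [hl, arH] at hk_lt
  case app => exact (h.appCond a b k hl hk).trans (List.prefix_append _ _)
  case lam =>
    obtain rfl : k = 0 := by omega
    exact h.lamCond a b hl hk
  case var =>
    obtain rfl : k = 0 := by omega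
    rw [← (h.varCond a b hl hk).2]
    exact (List.prefix_append _ _).trans (List.prefix_append _ _)
  case bh => omega

theorem prefixCoherent (h : CorrectPrefixHo G P) (w : V) : PrefixCoherent P (P w) := by
  induction G.rooted w with
  | refl => simp [PrefixCoherent, h.root]
  | tail _ hab ih => exact (ih.append_singleton rfl).of_prefix (h.prefix_of_mem_args hab)

theorem eq_append_singleton (h : CorrectPrefixHo G P) {w v : V} {p : List V}
    (hw : P w = p ++ [v]) : P w = P v ++ [v] := by
  rw [hw, h.prefixCoherent w p v [] hw]

theorem length_lt_of_mem (h : CorrectPrefixHo G P) {w x : V} (hx : x ∈ P w) :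
    (P x).length < (P w).length := by
  obtain ⟨s, t, e⟩ := List.append_of_mem hx
  rw [e, h.prefixCoherent w s x t e]
  simp

theorem mem_of_reflTransGen (h : CorrectPrefixHo G P) {x w u : V}
    (hwu : Relation.ReflTransGen (fun a b => b ∈ G.args a ∧ a ≠ x) w u) (hx : x ∈ P u) :
    x ∈ P w := by
  induction hwu using Relation.ReflTransGen.head_induction_on with
  | refl => exact hx
  | head hab _ ih =>
    simpa [hab.2.symm] using (h.prefix_of_mem_args hab.1).subset ih

theorem mem_of_eagerScope (hP : CorrectPrefixHo G P) {Q : V → List V}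
    (hQ : CorrectPrefixHo G Q) (eQ : EagerScope G Q) {w v : V} {p : List V}
    (hw : Q w = p ++ [v]) : v ∈ P w := by
  obtain ⟨ws, hhead, hchain, htail, wm, hlast, hvar, harg⟩ := eQ w p v hw
  obtain ⟨t, rfl⟩ : ∃ t, ws = w :: t := ⟨ws.tail, List.eq_cons_of_mem_head? hhead⟩
  have hQw := hQ.eq_append_singleton hw
  have hv_notMem : ∀ a ∈ w :: t, a ≠ v := by
    rintro a ha rfl
    rcases List.mem_cons.mp ha with rfl | ha
    · simp at hQw
    · simpa [hQw] using (htail a ha).length_le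
  have hv : v ∈ P wm := by simp [← (hP.varCond wm v hvar harg).2]
  exact hP.mem_of_reflTransGen (List.relationReflTransGen_of_exists_isChain_cons t
    (hchain.imp_of_mem_imp fun a b ha _ hab => ⟨hab, hv_notMem a ha⟩)
    ((List.getLast_eq_iff_getLast?_eq_some _).mpr hlast)) hv

end CorrectPrefixHo

/-- Uniqueness of eager-scope lambda higher-order term graphs over the same
    underlying term graph: two correct abstraction-prefix functions that are both
    eager-scope coincide. -/
theorem eagerScope_prefix_unique {V : Type} (G : TermGraph HoSig arH V)
    (P₁ P₂ : V → List V)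
    (h₁ : CorrectPrefixHo G P₁) (h₂ : CorrectPrefixHo G P₂)
    (e₁ : EagerScope G P₁) (e₂ : EagerScope G P₂) : P₁ = P₂ := by
  funext w
  induction w using (measure fun w => (P₁ w).length + (P₂ w).length).wf.induction with
  | _ w ih =>
  rcases List.eq_nil_or_concat' (P₁ w) with hw₁ | ⟨p₁, v₁, hw₁⟩ <;>
    rcases List.eq_nil_or_concat' (P₂ w) with hw₂ | ⟨p₂, v₂, hw₂⟩
  · rw [hw₁, hw₂]
  · simpa [hw₁] using h₁.mem_of_eagerScope h₂ e₂ hw₂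
  · simpa [hw₂] using h₂.mem_of_eagerScope h₁ e₁ hw₁
  have hv₁ : v₁ ∈ P₂ w := h₂.mem_of_eagerScope h₁ e₁ hw₁
  have hv₂ : v₂ ∈ P₁ w := h₁.mem_of_eagerScope h₂ e₂ hw₂
  have ih_of_mem : ∀ v ∈ P₁ w, v ∈ P₂ w → P₁ v = P₂ v := fun v hv₁ hv₂ =>
    ih v (Nat.add_lt_add (h₁.length_lt_of_mem hv₁) (h₂.length_lt_of_mem hv₂))
  have ih₁ : P₁ v₁ = P₂ v₁ := ih_of_mem v₁ (by simp [hw₁]) hv₁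
  have ih₂ : P₁ v₂ = P₂ v₂ := ih_of_mem v₂ hv₂ (by simp [hw₂])
  rw [h₁.eq_append_singleton hw₁] at hv₂ ⊢
  rw [h₂.eq_append_singleton hw₂] at hv₁ ⊢
  obtain rfl : v₁ = v₂ := by
    by_contra hne
    have lt₁ := h₁.length_lt_of_mem (by simpa [Ne.symm hne] using hv₂)
    have lt₂ := h₂.length_lt_of_mem (by simpa [hne] using hv₁)
    rw [ih₁, ih₂] at lt₁
    omega
  rw [ih₁]
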